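/- Let n ≥ 1 and q ≥ 2 be integers and let C ⊆ (ZMod q)^n be a nonempty subset. Then there exist m vectors x_1, …, x_m ∈ (ZMod q)^n with m = ⌈(q^n / |C|) · min{ n·ln q, 1 + ln |C| }⌉ such that the union of the translates C + x_1, …, C + x_m is all of (ZMod q)^n. -/

import Mathlib

/-!
Greedy covering (Lovász, Stein). Averaging over all translates shows that some translate of `C`
covers at least a `|C|/|G|` fraction of any set `U`, so `t` greedily chosen translates leave at most
`|G| (1 - |C|/|G|)^t ≤ |G| exp (-t |C|/|G|)` points uncovered. With `t = ⌈(|G|/|C|) log |G|⌉`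
that bound is `< 1`; with `t = ⌈(|G|/|C|) log |C|⌉` it is at most `|G|/|C|`, and every remaining
point is then covered by one more translate.
-/

open Finset Real
open scoped Pointwise

theorem Real.one_sub_pow_le_exp_neg_mul {p : ℝ} (hp : p ≤ 1) (t : ℕ) :
    (1 - p) ^ t ≤ exp (-(t * p)) := by
  rw [← mul_neg, exp_nat_mul]
  exact pow_le_pow_left₀ (sub_nonneg.2 hp) (one_sub_le_exp_neg p) t

theorem Real.one_sub_pow_lt_exp_neg_mul {p : ℝ} (hp₀ : 0 < p) (hp : p ≤ 1) {t : ℕ} (ht : t ≠ 0) :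
    (1 - p) ^ t < exp (-(t * p)) := by
  rw [← mul_neg, exp_nat_mul]
  exact pow_lt_pow_left₀ (one_sub_lt_exp_neg hp₀.ne') (sub_nonneg.2 hp) ht

theorem Real.exp_neg_mul_le_inv {a p : ℝ} {t : ℕ} (ha : 0 < a) (hp : 0 < p)
    (ht : p⁻¹ * log a ≤ t) : exp (-(t * p)) ≤ a⁻¹ := by
  rw [inv_mul_le_iff₀ hp, mul_comm] at ht
  rw [← exp_log ha, ← exp_neg, exp_le_exp, neg_le_neg_iff]
  exact ht

section Covering

variable {G : Type*} [AddGroup G] [Fintype G] [DecidableEq G]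

theorem Finset.sum_card_inter_vadd (U C : Finset G) :
    ∑ x : G, #(U ∩ (x +ᵥ C)) = #U * #C := by
  simp_rw [card_inter_vadd, addConvolution]
  rw [← card_eq_sum_card_fiberwise fun _ _ => mem_coe.2 (mem_univ _), card_product, card_neg]

theorem Finset.exists_card_sdiff_vadd_le (U C : Finset G) :
    ∃ x : G, (#(U \ (x +ᵥ C)) : ℝ) ≤ #U * (1 - #C / Fintype.card G) := by
  have hsum : ∑ _x : G, #U * #C ≤ ∑ x : G, #(U ∩ (x +ᵥ C)) * Fintype.card G := by
    rw [sum_const, card_univ, smul_eq_mul, ← sum_mul, sum_card_inter_vadd, mul_comm]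
  obtain ⟨x, -, hx⟩ := exists_le_of_sum_le univ_nonempty hsum
  refine ⟨x, ?_⟩
  have hN : (0 : ℝ) < Fintype.card G := by exact_mod_cast Fintype.card_pos
  have hx : (#U * #C / Fintype.card G : ℝ) ≤ #(U ∩ (x +ᵥ C)) := by
    rw [div_le_iff₀ hN]; exact_mod_cast hx
  have hsplit : (#(U \ (x +ᵥ C)) + #(U ∩ (x +ᵥ C)) : ℝ) = #U := by
    exact_mod_cast card_sdiff_add_card_inter U _
  rw [mul_one_sub, ← mul_div_assoc]
  linarith

theorem Finset.exists_card_sdiff_biUnion_vadd_le (C : Finset G) (t : ℕ) (U : Finset G) :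
    ∃ S : Finset G, #S ≤ t ∧
      (#(U \ S.biUnion (· +ᵥ C)) : ℝ) ≤ #U * (1 - #C / Fintype.card G) ^ t := by
  induction t generalizing U with
  | zero => exact ⟨∅, by simp⟩
  | succ t ih =>
    obtain ⟨x, hx⟩ := exists_card_sdiff_vadd_le U C
    obtain ⟨S, hSt, hS⟩ := ih (U \ (x +ᵥ C))
    have hratio : 0 ≤ 1 - (#C / Fintype.card G : ℝ) := by
      rw [sub_nonneg, div_le_one (by exact_mod_cast Fintype.card_pos)]
      exact_mod_cast card_le_univ C
    refine ⟨insert x S, (card_insert_le x S).trans (by omega), ?_⟩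
    rw [biUnion_insert, sdiff_union_distrib, ← sdiff_sdiff_left', pow_succ', ← mul_assoc]
    exact hS.trans (mul_le_mul_of_nonneg_right hx (pow_nonneg hratio t))

theorem Finset.exists_biUnion_vadd_eq_univ {C : Finset G} (hC : C.Nonempty) (S : Finset G) :
    ∃ T : Finset G, #T ≤ #S + #(univ \ S.biUnion (· +ᵥ C)) ∧ T.biUnion (· +ᵥ C) = univ := by
  obtain ⟨c, hc⟩ := hC
  refine ⟨S ∪ (univ \ S.biUnion (· +ᵥ C)).image (· - c),
    (card_union_le _ _).trans (Nat.add_le_add_left card_image_le _), ?_⟩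
  refine eq_univ_of_forall fun g => ?_
  by_cases hg : g ∈ S.biUnion (· +ᵥ C)
  · exact biUnion_subset_biUnion_of_subset_left _ subset_union_left hg
  · refine mem_biUnion.2 ⟨g - c, mem_union_right _ (mem_image_of_mem _ (by simpa using hg)), ?_⟩
    exact mem_vadd_finset.2 ⟨c, hc, by simp⟩

theorem Finset.exists_biUnion_vadd_eq_univ_card_le_add_floor {C : Finset G} (hC : C.Nonempty)
    (t : ℕ) : ∃ S : Finset G, S.biUnion (· +ᵥ C) = univ ∧
      #S ≤ t + ⌊(Fintype.card G : ℝ) * (1 - #C / Fintype.card G) ^ t⌋₊ := by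
  obtain ⟨S, hSt, hS⟩ := exists_card_sdiff_biUnion_vadd_le C t univ
  obtain ⟨T, hT, hcov⟩ := exists_biUnion_vadd_eq_univ hC S
  rw [card_univ] at hS
  exact ⟨T, hcov, hT.trans (add_le_add hSt (Nat.le_floor hS))⟩

theorem Finset.exists_biUnion_vadd_eq_univ_card_le [Nontrivial G] {C : Finset G}
    (hC : C.Nonempty) : ∃ S : Finset G, S.biUnion (· +ᵥ C) = univ ∧
      #S ≤ ⌈(Fintype.card G / #C : ℝ) * min (log (Fintype.card G)) (1 + log #C)⌉₊ := by
  set N : ℝ := (Fintype.card G : ℝ)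
  set p : ℝ := #C / N
  have hN : 1 < N := Nat.one_lt_cast.2 Fintype.one_lt_card
  have hk : (0 : ℝ) < #C := by exact_mod_cast hC.card_pos
  have hp : 0 < p := div_pos hk (by linarith)
  have hp₁ : p ≤ 1 := (div_le_one (by linarith)).2 (Nat.cast_le.2 (card_le_univ C))
  rw [← inv_div]
  rcases le_total (log N) (1 + log #C) with h | h
  · rw [min_eq_left h]
    set M := ⌈p⁻¹ * log N⌉₊
    have hM : M ≠ 0 := (Nat.ceil_pos.2 (mul_pos (inv_pos.2 hp) (log_pos hN))).ne'
    obtain ⟨S, hcov, hS⟩ := exists_biUnion_vadd_eq_univ_card_le_add_floor hC M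
    -- `1 - p < exp (-p)` is strict, so the uncovered count is `< 1`, not merely `≤ 1`.
    suffices hlt : N * (1 - p) ^ M < 1 by
      rw [Nat.floor_eq_zero.2 hlt, add_zero] at hS
      exact ⟨S, hcov, hS⟩
    calc N * (1 - p) ^ M < N * exp (-(M * p)) :=
          mul_lt_mul_of_pos_left (one_sub_pow_lt_exp_neg_mul hp hp₁ hM) (by linarith)
      _ ≤ N * N⁻¹ :=
          mul_le_mul_of_nonneg_left (exp_neg_mul_le_inv (by linarith) hp (Nat.le_ceil _))
            (by linarith)
      _ = 1 := mul_inv_cancel₀ (by linarith)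
  · rw [min_eq_right h]
    set t := ⌈p⁻¹ * log #C⌉₊
    obtain ⟨S, hcov, hS⟩ := exists_biUnion_vadd_eq_univ_card_le_add_floor hC t
    have hleft : N * (1 - p) ^ t ≤ p⁻¹ :=
      calc N * (1 - p) ^ t ≤ N * exp (-(t * p)) :=
            mul_le_mul_of_nonneg_left (one_sub_pow_le_exp_neg_mul hp₁ t) (by linarith)
        _ ≤ N * (#C : ℝ)⁻¹ :=
            mul_le_mul_of_nonneg_left (exp_neg_mul_le_inv hk hp (Nat.le_ceil _)) (by linarith)
        _ = p⁻¹ := by rw [inv_div, div_eq_mul_inv]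
    have hlog : 0 ≤ p⁻¹ * log #C :=
      mul_nonneg (inv_pos.2 hp).le (log_nonneg (by exact_mod_cast hC.card_pos))
    refine ⟨S, hcov, hS.trans ?_⟩
    calc t + ⌊N * (1 - p) ^ t⌋₊ ≤ t + ⌊p⁻¹⌋₊ := by gcongr
      _ = ⌈p⁻¹ * log #C + ⌊p⁻¹⌋₊⌉₊ := (Nat.ceil_add_natCast hlog _).symm
      _ ≤ ⌈p⁻¹ * (1 + log #C)⌉₊ := by
          gcongr
          rw [mul_one_add, add_comm]
          gcongr
          exact Nat.floor_le (inv_pos.2 hp).le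

end Covering

theorem Finset.exists_fin_iUnion_image_add_eq_univ {G : Type*} [AddCommGroup G] [Fintype G]
    [DecidableEq G] {C S : Finset G} (hS : S.biUnion (· +ᵥ C) = univ) {m : ℕ} (hm : #S ≤ m) :
    ∃ x : Fin m → G, ⋃ i, (fun y => y + x i) '' (C : Set G) = Set.univ := by
  refine ⟨fun i => S.toList.getD i 0, Set.eq_univ_of_forall fun g => ?_⟩
  obtain ⟨s, hs, hgs⟩ := mem_biUnion.1 (hS ▸ mem_univ g)
  obtain ⟨c, hc, rfl⟩ := mem_vadd_finset.1 hgs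
  obtain ⟨i, hi, rfl⟩ := List.mem_iff_getElem.1 (mem_toList.2 hs)
  have him : i < m := (length_toList S ▸ hi).trans_le hm
  refine Set.mem_iUnion.2 ⟨⟨i, him⟩, c, hc, ?_⟩
  simp only [List.getD_eq_getElem _ _ hi, vadd_eq_add, add_comm]

/-- covering by translates: every nonempty `C ⊆ (ZMod q)^n` has
`m = ⌈(q^n/|C|) · min(n ln q, 1 + ln |C|)⌉` translates covering the whole space. -/
theorem stmt9 {n q : ℕ} (hn : 1 ≤ n) (hq : 2 ≤ q)
    (C : Set (Fin n → ZMod q)) (hne : C.Nonempty) :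
    ∃ x : Fin (⌈((q : ℝ) ^ n / (C.ncard : ℝ)) *
        min ((n : ℝ) * Real.log q) (1 + Real.log (C.ncard : ℝ))⌉₊) → (Fin n → ZMod q),
      (⋃ i, (fun y => y + x i) '' C) = Set.univ := by
  classical
  have : NeZero q := ⟨by omega⟩
  have hcard : Fintype.card (Fin n → ZMod q) = q ^ n := by simp
  have : Nontrivial (Fin n → ZMod q) :=
    Fintype.one_lt_card_iff_nontrivial.1 (hcard ▸ Nat.one_lt_pow (by omega) hq)
  obtain ⟨S, hcov, hS⟩ := exists_biUnion_vadd_eq_univ_card_le (Set.toFinset_nonempty.2 hne)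
  rw [hcard, ← Set.ncard_eq_toFinset_card', Nat.cast_pow, log_pow] at hS
  simpa only [Set.coe_toFinset] using exists_fin_iUnion_image_add_eq_univ hcov hS
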